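/- The intersection of any two prime submodules of an R-module M is a 2-absorbing submodule of M (when this intersection is proper in M). -/

import Mathlib

/-- A proper submodule `P` of `M` is prime if whenever `r • m ∈ P`, then `m ∈ P` or
`r ∈ (P :_R M)`. -/
def IsPrimeSubmodule {R M : Type*} [CommRing R] [AddCommGroup M] [Module R M]
    (P : Submodule R M) : Prop :=
  P ≠ ⊤ ∧ ∀ r : R, ∀ m : M, r • m ∈ P → m ∈ P ∨ r ∈ P.colon ⊤

/-- A proper submodule `F` of `M` is 2-absorbing if whenever `a • b • m ∈ F`, then
`a * b ∈ (F :_R M)`, or `a • m ∈ F`, or `b • m ∈ F`. -/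
def IsTwoAbsorbing {R M : Type*} [CommRing R] [AddCommGroup M] [Module R M]
    (F : Submodule R M) : Prop :=
  F ≠ ⊤ ∧ ∀ a b : R, ∀ m : M, a • b • m ∈ F →
    a * b ∈ F.colon ⊤ ∨ a • m ∈ F ∨ b • m ∈ F

/-- The intersection of any two prime submodules of `M` is a 2-absorbing submodule of `M`. -/
theorem inf_primes_isTwoAbsorbing {R M : Type*} [CommRing R] [AddCommGroup M] [Module R M]
    (P₁ P₂ : Submodule R M) (h₁ : IsPrimeSubmodule P₁) (h₂ : IsPrimeSubmodule P₂) :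
    IsTwoAbsorbing (P₁ ⊓ P₂) := by
  obtain ⟨hT₁, hp₁⟩ := h₁
  obtain ⟨hT₂, hp₂⟩ := h₂
  refine ⟨fun h => hT₁ (top_unique (h ▸ inf_le_left)), fun a b m hm => ?_⟩
  obtain ⟨hm1, hm2⟩ := hm
  have c1a := hp₁ a (b • m) hm1
  have c1b := hp₁ b (a • m) (by rwa [smul_comm])
  have c2a := hp₂ a (b • m) hm2
  have c2b := hp₂ b (a • m) (by rwa [smul_comm])
  have key : ∀ (P : Submodule R M), (b • m ∈ P ∨ a ∈ P.colon ⊤) →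
      (a • m ∈ P ∨ b ∈ P.colon ⊤) →
      (a • m ∈ P ∧ b • m ∈ P) ∨ a ∈ P.colon ⊤ ∨ b ∈ P.colon ⊤ := by
    rintro P (hb | ha) (ha' | hb')
    · exact Or.inl ⟨ha', hb⟩
    · exact Or.inr (Or.inr hb')
    · exact Or.inr (Or.inl ha)
    · exact Or.inr (Or.inl ha)
  have colon_smul : ∀ (P : Submodule R M) (r : R) (x : M), r ∈ P.colon ⊤ → r • x ∈ P :=
    fun P r x hr => Submodule.mem_colon.mp hr x (by simp)
  have mul_colon : ∀ (P : Submodule R M) (r s : R), r ∈ P.colon ⊤ → r * s ∈ P.colon ⊤ := by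
    intro P r s hr
    rw [Submodule.mem_colon]
    intro p _
    rw [mul_smul]
    exact colon_smul P r _ hr
  have inf_colon : ∀ r : R, r ∈ P₁.colon ⊤ → r ∈ P₂.colon ⊤ → r ∈ (P₁ ⊓ P₂).colon ⊤ := by
    intro r h1 h2
    rw [Submodule.mem_colon]
    exact fun p _ => ⟨colon_smul P₁ r p h1, colon_smul P₂ r p h2⟩
  -- for each Pᵢ, a • m ∈ Pᵢ or b • m ∈ Pᵢ
  have e1 : a • m ∈ P₁ ∨ b • m ∈ P₁ := by
    rcases key P₁ c1a c1b with ⟨h, _⟩ | h | h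
    · exact Or.inl h
    · exact Or.inl (colon_smul P₁ a m h)
    · exact Or.inr (colon_smul P₁ b m h)
  have e2 : a • m ∈ P₂ ∨ b • m ∈ P₂ := by
    rcases key P₂ c2a c2b with ⟨h, _⟩ | h | h
    · exact Or.inl h
    · exact Or.inl (colon_smul P₂ a m h)
    · exact Or.inr (colon_smul P₂ b m h)
  by_cases hA1 : a • m ∈ P₁ <;> by_cases hA2 : a • m ∈ P₂
  · exact Or.inr (Or.inl ⟨hA1, hA2⟩)
  · -- a • m ∉ P₂, so b ∈ P₂.colon ⊤
    have hb2 : b ∈ P₂.colon ⊤ := c2b.resolve_left hA2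
    by_cases hB1 : b • m ∈ P₁
    · exact Or.inr (Or.inr ⟨hB1, colon_smul P₂ b m hb2⟩)
    · have ha1 : a ∈ P₁.colon ⊤ := c1a.resolve_left hB1
      exact Or.inl (inf_colon _ (mul_colon P₁ a b ha1) (by rw [mul_comm]; exact mul_colon P₂ b a hb2))
  · have hb1 : b ∈ P₁.colon ⊤ := c1b.resolve_left hA1
    by_cases hB2 : b • m ∈ P₂
    · exact Or.inr (Or.inr ⟨colon_smul P₁ b m hb1, hB2⟩)
    · have ha2 : a ∈ P₂.colon ⊤ := c2a.resolve_left hB2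
      exact Or.inl (inf_colon _ (by rw [mul_comm]; exact mul_colon P₁ b a hb1) (mul_colon P₂ a b ha2))
  · have hB1 : b • m ∈ P₁ := e1.resolve_left hA1
    have hB2 : b • m ∈ P₂ := e2.resolve_left hA2
    exact Or.inr (Or.inr ⟨hB1, hB2⟩)
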